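/- arXiv:1504.04404 — 4 statements merged into one kernel-verified Lean document; each statement's English description precedes it below -/
import Mathlib

section
/- Let C n satisfy C 0 = 1, C 1 = 4, C n = 3 C(n-1) + 2 C(n-2), and let D n = 1, 4 for n = 0, 1 and D n = 13*4^n/8 - 2*2^n + 1 for n ≥ 2 (here 13*4^n/8 is an integer since n ≥ 2). Then the density C n / D n tends to 0 as n → ∞, i.e., Filter.Tendsto (fun n => (C n : ℝ) / (D n : ℝ)) Filter.atTop (nhds 0). -/
/-! `C n` grows like `((3 + √17) / 2) ^ n`; any `r` with `3 r + 2 ≤ r ^ 2`, e.g. `r = 18 / 5`,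
dominates it, while `D n ≥ 4 ^ n`. Hence `C n / D n ≤ 2 * (9 / 10) ^ n → 0`. -/

def C : ℕ → ℕ
  | 0 => 1
  | 1 => 4
  | n + 2 => 3 * C (n + 1) + 2 * C n

def D (n : ℕ) : ℕ :=
  if n = 0 then 1 else if n = 1 then 4 else 13 * 4 ^ n / 8 - 2 * 2 ^ n + 1

theorem le_mul_pow_of_two_step_le {x : ℕ → ℝ} {a b r M : ℝ} (ha : 0 ≤ a) (hb : 0 ≤ b)
    (hr : 0 ≤ r) (hM : 0 ≤ M) (hchar : a * r + b ≤ r ^ 2) (h0 : x 0 ≤ M) (h1 : x 1 ≤ M * r)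
    (hstep : ∀ n, x (n + 2) ≤ a * x (n + 1) + b * x n) (n : ℕ) : x n ≤ M * r ^ n := by
  induction n using Nat.twoStepInduction with
  | zero => simpa using h0
  | one => simpa using h1
  | more n ih₀ ih₁ =>
    have hMr : 0 ≤ M * r ^ n := by positivity
    calc x (n + 2) ≤ a * x (n + 1) + b * x n := hstep n
      _ ≤ a * (M * r ^ (n + 1)) + b * (M * r ^ n) := by gcongr
      _ = M * r ^ n * (a * r + b) := by ring
      _ ≤ M * r ^ n * r ^ 2 := by gcongr
      _ = M * r ^ (n + 2) := by ring

theorem C_le (n : ℕ) : (C n : ℝ) ≤ 2 * (18 / 5) ^ n :=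
  le_mul_pow_of_two_step_le (x := fun n => (C n : ℝ)) (a := 3) (b := 2) (r := 18 / 5) (M := 2)
    (by norm_num) (by norm_num) (by norm_num) (by norm_num) (by norm_num)
    (by norm_num [C]) (by norm_num [C]) (fun n => by simp [C]) n

theorem four_pow_le_D (n : ℕ) : 4 ^ n ≤ D n := by
  match n with
  | 0 => simp [D]
  | 1 => simp [D]
  | m + 2 =>
    have hD : D (m + 2) = 26 * 4 ^ m - 8 * 2 ^ m + 1 := by
      rw [D, if_neg (by omega), if_neg (by omega), pow_add, pow_add]
      omega
    have h24 : 2 ^ m ≤ 4 ^ m := Nat.pow_le_pow_left (by norm_num) m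
    rw [hD, pow_add]
    omega

theorem density_tendsto_zero :
    Filter.Tendsto (fun n => (C n : ℝ) / (D n : ℝ)) Filter.atTop (nhds 0) := by
  have hgeom : Filter.Tendsto (fun n : ℕ => 2 * (9 / 10 : ℝ) ^ n) Filter.atTop (nhds 0) := by
    simpa using (tendsto_pow_atTop_nhds_zero_of_lt_one (by norm_num : (0 : ℝ) ≤ 9 / 10)
      (by norm_num)).const_mul 2
  refine squeeze_zero (fun n => by positivity) (fun n => ?_) hgeom
  have hD : (4 : ℝ) ^ n ≤ D n := by exact_mod_cast four_pow_le_D n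
  calc (C n : ℝ) / D n ≤ 2 * (18 / 5) ^ n / 4 ^ n :=
        div_le_div₀ (by positivity) (C_le n) (by positivity) hD
    _ = 2 * (9 / 10) ^ n := by rw [mul_div_assoc, ← div_pow]; norm_num
end

section
/- Define E : ℕ → ℕ by E 0 = 1, E 1 = 4, and E n = 2 * C (n-1) + E (n-2) + 2^(n-1) for n ≥ 2, where C satisfies C 0 = 1, C 1 = 4, C n = 3 C(n-1) + 2 C(n-2). Then for all n, (E n : ℝ) = ((17 + 7*Real.sqrt 17)/68) * ((3 + Real.sqrt 17)/2)^n + ((17 - 7*Real.sqrt 17)/68) * ((3 - Real.sqrt 17)/2)^n + (2^(n+2) - (-1)^n)/6. -/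
def E : ℕ → ℕ
  | 0 => 1
  | 1 => 4
  | n + 2 => 2 * C (n + 1) + E n + 2 ^ (n + 1)

lemma C_add_two (n : ℕ) : (C (n + 2) : ℝ) = 3 * C (n + 1) + 2 * C n := by
  simp [C]

lemma E_add_two (n : ℕ) : (E (n + 2) : ℝ) = 2 * C (n + 1) + E n + 2 ^ (n + 1) := by
  simp [E]

section SqrtSeventeen

variable {s : ℝ} (hs : s ^ 2 = 17)
include hs

lemma half_three_add_sq_eq : ((3 + s) / 2) ^ 2 = 3 * ((3 + s) / 2) + 2 := by
  linear_combination hs / 4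

lemma E_coeff_mul_half_three_add_sq_sub_one :
    (17 + 7 * s) / 68 * (((3 + s) / 2) ^ 2 - 1) = 2 * ((17 + 5 * s) / 34) * ((3 + s) / 2) := by
  linear_combination (7 * s + 19) / 272 * hs

theorem C_eq_binet (n : ℕ) :
    (C n : ℝ) = (17 + 5 * s) / 34 * ((3 + s) / 2) ^ n + (17 - 5 * s) / 34 * ((3 - s) / 2) ^ n := by
  have hs' : (-s) ^ 2 = 17 := by rwa [neg_sq]
  induction n using Nat.twoStepInduction with
  | zero => simp only [C, Nat.cast_one, pow_zero]; ring
  | one => simp only [C, Nat.cast_ofNat, pow_one]; linear_combination -5 / 34 * hs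
  | more n ih₀ ih₁ =>
    rw [C_add_two, ih₀, ih₁]
    linear_combination -(17 + 5 * s) / 34 * ((3 + s) / 2) ^ n * half_three_add_sq_eq hs
      - (17 - 5 * s) / 34 * ((3 - s) / 2) ^ n * half_three_add_sq_eq hs'

theorem E_eq_binet (n : ℕ) :
    (E n : ℝ) = (17 + 7 * s) / 68 * ((3 + s) / 2) ^ n + (17 - 7 * s) / 68 * ((3 - s) / 2) ^ n
      + (2 ^ (n + 2) - (-1) ^ n) / 6 := by
  have hs' : (-s) ^ 2 = 17 := by rwa [neg_sq]
  induction n using Nat.twoStepInduction with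
  | zero => simp only [E, Nat.cast_one, pow_zero]; ring
  | one => simp only [E, Nat.cast_ofNat, pow_one]; linear_combination -7 / 68 * hs
  | more n ih₀ _ =>
    rw [E_add_two, ih₀, C_eq_binet hs]
    linear_combination -((3 + s) / 2) ^ n * E_coeff_mul_half_three_add_sq_sub_one hs
      - ((3 - s) / 2) ^ n * E_coeff_mul_half_three_add_sq_sub_one hs'

end SqrtSeventeen

theorem E_closed_form (n : ℕ) :
    (E n : ℝ) = ((17 + 7 * Real.sqrt 17) / 68) * ((3 + Real.sqrt 17) / 2) ^ n
      + ((17 - 7 * Real.sqrt 17) / 68) * ((3 - Real.sqrt 17) / 2) ^ n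
      + (2 ^ (n + 2) - (-1 : ℝ) ^ n) / 6 :=
  E_eq_binet (Real.sq_sqrt (by norm_num)) n
end

section
/- Let r n k = R n k % 2 be the Pascal rhombus mod 2. The diagonal D_0, given by r n (-(n:ℤ) + 1) for n ≥ 1, is constant: r n (1 - n) = 1 for all n ≥ 1. -/
/-! Every entry strictly left of the edge diagonal `k = 1 - n` vanishes, since each term of the
recurrence sits on or left of that line one or two rows up. Hence the recurrence for an edge entry
keeps only the previous edge entry, and the edge is constantly `1`. -/

def R : ℕ → ℤ → ℕ
  | 0, _ => 0
  | 1, k => if k = 0 then 1 else 0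
  | n + 2, k => R (n + 1) (k - 1) + R (n + 1) k + R (n + 1) (k + 1) + R n k

theorem R_eq_zero_of_add_lt_one : ∀ (n : ℕ) {k : ℤ}, k + n < 1 → R n k = 0
  | 0, _, _ => rfl
  | 1, k, hk => by
    rw [R, if_neg (by omega)]
  | n + 2, k, hk => by
    push_cast at hk
    rw [R, R_eq_zero_of_add_lt_one (n + 1) (by push_cast; omega),
      R_eq_zero_of_add_lt_one (n + 1) (by push_cast; omega),
      R_eq_zero_of_add_lt_one (n + 1) (by push_cast; omega),
      R_eq_zero_of_add_lt_one n (by omega)]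

theorem R_succ_neg_self : ∀ n : ℕ, R (n + 1) (-n) = 1
  | 0 => rfl
  | n + 1 => by
    have hedge : -((n + 1 : ℕ) : ℤ) + 1 = -n := by push_cast; ring
    rw [R, R_eq_zero_of_add_lt_one (n + 1) (by push_cast; omega),
      R_eq_zero_of_add_lt_one (n + 1) (by push_cast; omega),
      R_eq_zero_of_add_lt_one n (by push_cast; omega), hedge, R_succ_neg_self n]

theorem diagonal_zero_constant (n : ℕ) (hn : 1 ≤ n) : R n (1 - (n : ℤ)) % 2 = 1 := by
  obtain ⟨m, rfl⟩ := Nat.exists_eq_add_of_le' hn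
  have hk : 1 - ((m + 1 : ℕ) : ℤ) = -m := by push_cast; ring
  rw [hk, R_succ_neg_self]
end

section
/- Let r n k = R n k % 2 be the Pascal rhombus mod 2. For all n ≥ 1, and all (i, j) with 1 ≤ i ≤ 2^(n-1) and |j| ≤ i - 1 (cells of the triangle with apex (1,0) and base row 2^(n-1)): r i j = r (2^n + i) (-(2^n : ℤ) + j) and r i j = r (2^n + i) ((2^n : ℤ) + j). -/
/-!
Mod 2, row `n` of the rhombus is the coefficient list of a Laurent polynomial `u n` over `𝔽₂`
with `u (n + 2) = c * u (n + 1) + u n`, `c = T + 1 + T⁻¹`. Extended to `ℤ` by `u (-m) = u m`,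
the recurrence reads `u (m + 1) + u (m - 1) = c * u m` for every `m`, and iterating the doubling
identity gives `u (m + N) + u (m - N) = c ^ N * u m` for `N = 2 ^ k`, where
`c ^ N = T ^ N + 1 + T ^ (-N)` by Frobenius. Hence
`u (N + i) = (T ^ N + 1 + T ^ (-N)) * u i + u (N - i)`.
Row `m` lives in `|k| < m`, so when `2 i ≤ N + 1` the only term of this sum reaching a coefficient
`± N + j` with `|j| < i` is the copy `T ^ (∓N) * u i`, which contributes the coefficient `j` of `u i`.
-/

open LaurentPolynomial

section Recurrence

variable {A : Type*} [CommRing A]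

theorem add_shift_two_mul {u : ℤ → A} {e : A} {d : ℤ}
    (h : ∀ m, u (m + d) + u (m - d) = e * u m) (m : ℤ) :
    u (m + 2 * d) + u (m - 2 * d) = (e ^ 2 - 2) * u m := by
  have h₁ : u (m + 2 * d) + u m = e * u (m + d) := by
    simpa [two_mul, add_assoc] using h (m + d)
  have h₂ : u m + u (m - 2 * d) = e * u (m - d) := by
    simpa [two_mul, sub_sub] using h (m - d)
  linear_combination h₁ + h₂ + e * h m

variable [CharP A 2]

theorem add_shift_two_pow {u : ℤ → A} {c : A} (h : ∀ m, u (m + 1) + u (m - 1) = c * u m)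
    (k : ℕ) (m : ℤ) : u (m + 2 ^ k) + u (m - 2 ^ k) = c ^ 2 ^ k * u m := by
  induction k generalizing m with
  | zero => simpa using h m
  | succ k ih =>
    rw [pow_succ', add_shift_two_mul ih, CharTwo.two_eq_zero (R := A), sub_zero, ← pow_mul,
      pow_succ]

theorem add_natAbs_shift_eq {f : ℕ → A} {c : A} (h₀ : f 0 = 0)
    (h : ∀ n, f (n + 2) = c * f (n + 1) + f n) (m : ℤ) :
    f (m + 1).natAbs + f (m - 1).natAbs = c * f m.natAbs := by
  have hnat : ∀ n : ℕ, f (n + 1) + f ((n : ℤ) - 1).natAbs = c * f n := by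
    rintro (_ | n)
    · simp [h₀, CharTwo.add_self_eq_zero]
    · rw [h, add_assoc, show ((n + 1 : ℕ) - 1 : ℤ).natAbs = n by omega,
        CharTwo.add_self_eq_zero, add_zero]
  obtain ⟨n, hm | hm⟩ := Int.eq_nat_or_neg m
  · rw [hm]; exact_mod_cast hnat n
  · rw [hm, show (-(n : ℤ) + 1).natAbs = ((n : ℤ) - 1).natAbs by omega,
      show (-(n : ℤ) - 1).natAbs = n + 1 by omega, Int.natAbs_neg, Int.natAbs_natCast, add_comm]
    exact hnat n

end Recurrence

theorem R_eq_zero_of_le_abs : ∀ (n : ℕ) (k : ℤ), (n : ℤ) ≤ |k| → R n k = 0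
  | 0, _, _ => rfl
  | 1, k, hk => if_neg (by rw [le_abs] at hk; omega)
  | n + 2, k, hk => by
    rw [le_abs] at hk
    simp only [R]
    rw [R_eq_zero_of_le_abs (n + 1) (k - 1) (by rw [le_abs]; omega),
      R_eq_zero_of_le_abs (n + 1) k (by rw [le_abs]; omega),
      R_eq_zero_of_le_abs (n + 1) (k + 1) (by rw [le_abs]; omega),
      R_eq_zero_of_le_abs n k (by rw [le_abs]; omega)]

theorem LaurentPolynomial.coeff_T_mul {S : Type*} [Semiring S] (a b : ℤ) (p : S[T;T⁻¹]) :
    (T a * p).coeff b = p.coeff (b - a) := by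
  rw [T, AddMonoidAlgebra.coeff_single_mul_apply, one_mul, neg_add_eq_sub]

instance LaurentPolynomial.charP {S : Type*} [CommSemiring S] (p : ℕ) [CharP S p] :
    CharP S[T;T⁻¹] p :=
  charP_of_injective_algebraMap (R := S) AddMonoidAlgebra.single_right_injective p

noncomputable def rhombusPoly : ℕ → (ZMod 2)[T;T⁻¹]
  | 0 => 0
  | 1 => 1
  | n + 2 => (T 1 + 1 + T (-1)) * rhombusPoly (n + 1) + rhombusPoly n

theorem rhombusPoly_add_two (n : ℕ) :
    rhombusPoly (n + 2) = (T 1 + 1 + T (-1)) * rhombusPoly (n + 1) + rhombusPoly n := by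
  rw [rhombusPoly]

theorem coeff_rhombusPoly : ∀ (n : ℕ) (k : ℤ), (rhombusPoly n).coeff k = R n k
  | 0, k => by simp [rhombusPoly, R]
  | 1, k => by
    by_cases hk : k = 0 <;> simp [rhombusPoly, R, hk, ← T_zero, eq_comm]
  | n + 2, k => by
    rw [rhombusPoly_add_two, R, add_mul, add_mul, one_mul]
    simp only [AddMonoidAlgebra.coeff_add, Finsupp.add_apply, coeff_T_mul, coeff_rhombusPoly,
      sub_neg_eq_add]
    push_cast
    rfl

theorem coeff_rhombusPoly_eq_zero {n : ℕ} {k : ℤ} (h : (n : ℤ) ≤ |k|) :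
    (rhombusPoly n).coeff k = 0 := by
  rw [coeff_rhombusPoly, R_eq_zero_of_le_abs n k h, Nat.cast_zero]

theorem T_add_one_add_T_neg_pow_two_pow {S : Type*} [CommRing S] [CharP S 2] (k : ℕ) :
    (T 1 + 1 + T (-1) : S[T;T⁻¹]) ^ 2 ^ k = T (2 ^ k) + 1 + T (-2 ^ k) := by
  rw [add_pow_char_pow, add_pow_char_pow, T_pow, T_pow, one_pow]
  push_cast
  ring_nf

theorem rhombusPoly_two_pow_add (k i : ℕ) (hi : i ≤ 2 ^ k) :
    rhombusPoly (2 ^ k + i) =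
      (T (2 ^ k) + 1 + T (-2 ^ k)) * rhombusPoly i + rhombusPoly (2 ^ k - i) := by
  have h := add_shift_two_pow (u := fun m ↦ rhombusPoly m.natAbs)
    (add_natAbs_shift_eq rfl rhombusPoly_add_two) k i
  have hcast : ((2 ^ k : ℕ) : ℤ) = 2 ^ k := by push_cast; rfl
  rw [← hcast, show ((i : ℤ) + (2 ^ k : ℕ)).natAbs = 2 ^ k + i by omega,
    show ((i : ℤ) - (2 ^ k : ℕ)).natAbs = 2 ^ k - i by omega, Int.natAbs_natCast,
    T_add_one_add_T_neg_pow_two_pow] at h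
  rw [eq_sub_of_add_eq h, CharTwo.sub_eq_add]

theorem coeff_rhombusPoly_two_pow_add (k i : ℕ) (hi : i ≤ 2 ^ k) (b : ℤ) :
    (rhombusPoly (2 ^ k + i)).coeff b = (rhombusPoly i).coeff (b - 2 ^ k) +
      (rhombusPoly i).coeff b + (rhombusPoly i).coeff (b + 2 ^ k) +
      (rhombusPoly (2 ^ k - i)).coeff b := by
  rw [rhombusPoly_two_pow_add k i hi, add_mul, add_mul, one_mul]
  simp only [AddMonoidAlgebra.coeff_add, Finsupp.add_apply, coeff_T_mul, sub_neg_eq_add]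

theorem coeff_rhombusPoly_two_pow_add_of_abs_lt {k i : ℕ} {j : ℤ} (hi : 2 * i ≤ 2 ^ k + 1)
    (hj : |j| < i) :
    (rhombusPoly (2 ^ k + i)).coeff (-2 ^ k + j) = (rhombusPoly i).coeff j ∧
      (rhombusPoly (2 ^ k + i)).coeff (2 ^ k + j) = (rhombusPoly i).coeff j := by
  have hik : i ≤ 2 ^ k := by have := abs_nonneg j; omega
  have hcast : ((2 ^ k : ℕ) : ℤ) = 2 ^ k := by push_cast; rfl
  rw [abs_lt] at hj
  rw [coeff_rhombusPoly_two_pow_add k i hik, coeff_rhombusPoly_two_pow_add k i hik]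
  simp only [← hcast]
  constructor
  · rw [coeff_rhombusPoly_eq_zero, coeff_rhombusPoly_eq_zero,
      coeff_rhombusPoly_eq_zero (n := 2 ^ k - i)]
    · simp
    all_goals rw [le_abs]; omega
  · rw [coeff_rhombusPoly_eq_zero (k := _ + j), coeff_rhombusPoly_eq_zero (k := _ + j + _),
      coeff_rhombusPoly_eq_zero (n := 2 ^ k - i)]
    · simp
    all_goals rw [le_abs]; omega

theorem triangles_repeat_general (n : ℕ) (i : ℕ) (j : ℤ)
    (hi2 : i ≤ 2 ^ (n - 1)) (hj : |j| ≤ (i : ℤ) - 1) :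
    R i j % 2 = R (2 ^ n + i) (-(2 ^ n : ℤ) + j) % 2 ∧
    R i j % 2 = R (2 ^ n + i) ((2 ^ n : ℤ) + j) % 2 := by
  have hi : 2 * i ≤ 2 ^ n + 1 := by
    rcases n with _ | n
    · simp only [zero_tsub, pow_zero] at hi2 ⊢; omega
    · rw [Nat.add_sub_cancel] at hi2; rw [pow_succ]; omega
  obtain ⟨h₁, h₂⟩ := coeff_rhombusPoly_two_pow_add_of_abs_lt hi (j := j) (by linarith)
  simp only [← ZMod.natCast_eq_natCast_iff', ← coeff_rhombusPoly]
  exact ⟨h₁.symm, h₂.symm⟩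

theorem triangles_repeat (n : ℕ) (hn : 1 ≤ n) (i : ℕ) (j : ℤ)
    (hi1 : 1 ≤ i) (hi2 : i ≤ 2 ^ (n - 1)) (hj : |j| ≤ (i : ℤ) - 1) :
    R i j % 2 = R (2 ^ n + i) (-(2 ^ n : ℤ) + j) % 2 ∧
    R i j % 2 = R (2 ^ n + i) ((2 ^ n : ℤ) + j) % 2 :=
  triangles_repeat_general n i j hi2 hj
end
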